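/- The improper integral of -log(1-x)/(x(1-x)) over the interval (0, 1/2) equals pi^2/12. (This is the evaluation of I_1 + I_2, up to the scale factor 3, which yields the paper's computation that the Masur--Veech volume of the unit tangent bundle of the modular surface equals pi^2/6.) -/

import Mathlib

/-!
Since `1 / (x (1 - x)) = 1 / x + 1 / (1 - x)`, the integral is `Li₂(1/2) + (log 2)² / 2`: the
second summand has the elementary primitive `log (1 - x)² / 2`, and `∫₀ᵗ -log (1 - x) / x = Li₂ t`
by integrating the logarithmic series termwise. Euler's reflection formula
`Li₂ t + Li₂ (1 - t) = π² / 6 - log t log (1 - t)` gives `Li₂(1/2) = π² / 12 - (log 2)² / 2`; it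
follows from `Li₂ (1 - t) = ∫ₜ¹ -log x / (1 - x)` by expanding `1 / (1 - x)` geometrically and
integrating `xⁿ (-log x)` over `[t, 1]` in closed form.
-/

open MeasureTheory Real Set intervalIntegral

/-- The dilogarithm `Li₂`, through its power series (convergent for `|t| ≤ 1`). -/
noncomputable def dilog (t : ℝ) : ℝ := ∑' n : ℕ, t ^ (n + 1) / ((n : ℝ) + 1) ^ 2

theorem hasSum_one_div_nat_add_one_sq :
    HasSum (fun n : ℕ => 1 / ((n : ℝ) + 1) ^ 2) (π ^ 2 / 6) := by
  simpa using (hasSum_nat_add_iff' 1).2 hasSum_zeta_two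

theorem summable_pow_div_nat_add_one_sq {t : ℝ} (ht : |t| ≤ 1) :
    Summable fun n : ℕ => t ^ (n + 1) / ((n : ℝ) + 1) ^ 2 := by
  refine hasSum_one_div_nat_add_one_sq.summable.of_norm_bounded fun n => ?_
  rw [norm_div, norm_pow, Real.norm_eq_abs, norm_of_nonneg (by positivity)]
  gcongr
  exact pow_le_one₀ (abs_nonneg t) ht

theorem hasSum_intervalIntegral_of_nonneg {F : ℕ → ℝ → ℝ} {f : ℝ → ℝ} {a b : ℝ} (hab : a ≤ b)
    (hF_int : ∀ n, IntervalIntegrable (F n) volume a b)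
    (hF_nonneg : ∀ n, ∀ x ∈ Ioo a b, 0 ≤ F n x)
    (hF_sum : Summable fun n => ∫ x in a..b, F n x)
    (hf : ∀ x ∈ Ioo a b, HasSum (fun n => F n x) (f x)) :
    HasSum (fun n => ∫ x in a..b, F n x) (∫ x in a..b, f x) := by
  have h_Ioo (g : ℝ → ℝ) : ∫ x in a..b, g x = ∫ x in Ioo a b, g x := by
    rw [integral_of_le hab, integral_Ioc_eq_integral_Ioo]
  simp only [h_Ioo] at hF_sum ⊢
  have h_norm (n : ℕ) : ∫ x in Ioo a b, ‖F n x‖ = ∫ x in Ioo a b, F n x :=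
    setIntegral_congr_fun measurableSet_Ioo fun x hx => norm_of_nonneg (hF_nonneg n x hx)
  have := hasSum_integral_of_summable_integral_norm
    (fun n => ((hF_int n).1).mono_set Ioo_subset_Ioc_self) (by simpa only [h_norm] using hF_sum)
  rwa [setIntegral_congr_fun measurableSet_Ioo fun x hx => (hf x hx).tsum_eq] at this

/-- On `(0, t]` the integrand is the difference quotient of `-log (1 - x)` at `0`, whose `dslope`
is continuous. -/
theorem intervalIntegrable_neg_log_one_sub_div {t : ℝ} (ht : t < 1) :
    IntervalIntegrable (fun x => -log (1 - x) / x) volume 0 t := by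
  have h_diff : ∀ x ∈ Iio (1 : ℝ), DifferentiableAt ℝ (fun x => -log (1 - x)) x := fun x hx =>
    ((differentiableAt_const 1).sub differentiableAt_id).log
      (by simpa [sub_eq_zero] using hx.ne') |>.neg
  have h_cont : ContinuousOn (dslope (fun x => -log (1 - x)) 0) (Iio 1) :=
    (continuousOn_dslope (Iio_mem_nhds one_pos)).2
      ⟨fun x hx => (h_diff x hx).continuousAt.continuousWithinAt, h_diff 0 (mem_Iio.2 one_pos)⟩
  refine (h_cont.mono ?_).intervalIntegrable.congr_uIoo fun x hx => ?_
  · exact fun x hx => hx.2.trans_lt (max_lt one_pos ht)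
  · rw [dslope_of_ne _ (ne_of_mem_of_not_mem hx left_notMem_uIoo), slope_def_field]
    simp

theorem integral_neg_log_one_sub_div_eq_dilog {t : ℝ} (ht0 : 0 ≤ t) (ht1 : t < 1) :
    ∫ x in 0..t, -log (1 - x) / x = dilog t := by
  have h_int (n : ℕ) : ∫ x in 0..t, x ^ n / ((n : ℝ) + 1) = t ^ (n + 1) / ((n : ℝ) + 1) ^ 2 := by
    rw [intervalIntegral.integral_div, integral_pow]
    field_simp
    ring
  have h_series : ∀ x ∈ Ioo 0 t,
      HasSum (fun n : ℕ => x ^ n / ((n : ℝ) + 1)) (-log (1 - x) / x) := fun x hx => by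
    have := (hasSum_pow_div_log_of_abs_lt_one
      (abs_lt.2 ⟨by linarith [hx.1], hx.2.trans ht1⟩)).div_const x
    have h_eq : (fun n : ℕ => x ^ (n + 1) / ((n : ℝ) + 1) / x)
        = fun n : ℕ => x ^ n / ((n : ℝ) + 1) := by
      ext n
      field_simp [hx.1.ne']
      ring
    rwa [h_eq] at this
  have := hasSum_intervalIntegral_of_nonneg ht0
    (fun n => (continuous_pow n |>.div_const _).intervalIntegrable _ _)
    (fun n x hx => div_nonneg (pow_nonneg hx.1.le n) (by positivity))
    (by simpa only [h_int] using
      summable_pow_div_nat_add_one_sq (abs_le.2 ⟨by linarith, ht1.le⟩)) h_series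
  simp only [h_int] at this
  exact this.tsum_eq.symm

theorem intervalIntegrable_neg_log_one_sub_div_one_sub {t : ℝ} (ht : t < 1) :
    IntervalIntegrable (fun x => -log (1 - x) / (1 - x)) volume 0 t := by
  have h_ne : ∀ x ∈ Iio (1 : ℝ), 1 - x ≠ 0 := fun x hx => sub_ne_zero.2 (ne_of_gt hx)
  have h_cont : ContinuousOn (fun x => -log (1 - x) / (1 - x)) (Iio 1) := by
    fun_prop (disch := assumption)
  exact (h_cont.mono fun x hx => hx.2.trans_lt (max_lt one_pos ht)).intervalIntegrable

theorem integral_neg_log_one_sub_div_one_sub {t : ℝ} (ht : t < 1) :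
    ∫ x in 0..t, -log (1 - x) / (1 - x) = log (1 - t) ^ 2 / 2 := by
  have h_deriv : ∀ x ∈ uIcc 0 t,
      HasDerivAt (fun y => log (1 - y) ^ 2 / 2) (-log (1 - x) / (1 - x)) x := fun x hx => by
    have h_pos : 0 < 1 - x := sub_pos.2 (hx.2.trans_lt (max_lt one_pos ht))
    have h_log : HasDerivAt (fun y => log (1 - y)) (-1 / (1 - x)) x := by
      simpa using ((hasDerivAt_id x).const_sub 1).log h_pos.ne'
    refine ((h_log.pow 2).div_const 2).congr_deriv ?_
    norm_num
    ring
  rw [integral_eq_sub_of_hasDerivAt h_deriv (intervalIntegrable_neg_log_one_sub_div_one_sub ht)]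
  simp

theorem continuousOn_pow_mul_neg_log (n : ℕ) {t : ℝ} (ht : 0 < t) :
    ContinuousOn (fun x => x ^ n * -log x) (uIcc t 1) := by
  have h_ne : ∀ x ∈ uIcc t 1, x ≠ 0 := fun x hx => ((lt_min ht one_pos).trans_le hx.1).ne'
  fun_prop (disch := assumption)

theorem integral_pow_mul_neg_log (n : ℕ) {t : ℝ} (ht : 0 < t) :
    ∫ x in t..1, x ^ n * -log x
      = 1 / ((n : ℝ) + 1) ^ 2 - t ^ (n + 1) / ((n : ℝ) + 1) ^ 2
        + log t * (t ^ (n + 1) / ((n : ℝ) + 1)) := by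
  have h_pos : ∀ x ∈ uIcc t 1, 0 < x := fun x hx => (lt_min ht one_pos).trans_le hx.1
  have h_deriv : ∀ x ∈ uIcc t 1, HasDerivAt
      (fun y => y ^ (n + 1) / ((n : ℝ) + 1) ^ 2 - y ^ (n + 1) * log y / ((n : ℝ) + 1))
      (x ^ n * -log x) x := fun x hx => by
    have h_pow : HasDerivAt (fun y => y ^ (n + 1)) (((n : ℝ) + 1) * x ^ n) x := by
      simpa using hasDerivAt_pow (n + 1) x
    have := (h_pow.div_const (((n : ℝ) + 1) ^ 2)).sub
      ((h_pow.mul (hasDerivAt_log (h_pos x hx).ne')).div_const ((n : ℝ) + 1))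
    refine this.congr_deriv ?_
    field_simp [(h_pos x hx).ne']
    ring
  rw [integral_eq_sub_of_hasDerivAt h_deriv
    (continuousOn_pow_mul_neg_log n ht).intervalIntegrable]
  simp only [one_pow, log_one]
  ring

theorem integral_neg_log_div_one_sub {t : ℝ} (ht0 : 0 < t) (ht1 : t < 1) :
    ∫ x in t..1, -log x / (1 - x) = π ^ 2 / 6 - dilog t - log t * log (1 - t) := by
  have h_series : ∀ x ∈ Ioo t 1, HasSum (fun n : ℕ => x ^ n * -log x) (-log x / (1 - x)) :=
    fun x hx => by
      rw [div_eq_inv_mul]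
      exact (hasSum_geometric_of_lt_one (ht0.trans hx.1).le hx.2).mul_right _
  have h_nonneg : ∀ (n : ℕ), ∀ x ∈ Ioo t 1, 0 ≤ x ^ n * -log x := fun n x hx =>
    mul_nonneg (pow_nonneg (ht0.trans hx.1).le n)
      (neg_nonneg.2 (log_nonpos (ht0.trans hx.1).le hx.2.le))
  have h_sum := (hasSum_one_div_nat_add_one_sq.sub
      (summable_pow_div_nat_add_one_sq (abs_le.2 ⟨by linarith, ht1.le⟩)).hasSum).add
    ((hasSum_pow_div_log_of_abs_lt_one (abs_lt.2 ⟨by linarith, ht1⟩)).mul_left (log t))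
  simp only [← integral_pow_mul_neg_log _ ht0] at h_sum
  have := hasSum_intervalIntegral_of_nonneg ht1.le
    (fun n => (continuousOn_pow_mul_neg_log n ht0).intervalIntegrable)
    h_nonneg h_sum.summable h_series
  rw [this.unique h_sum, dilog]
  ring

theorem dilog_add_dilog_one_sub {t : ℝ} (ht0 : 0 < t) (ht1 : t < 1) :
    dilog t + dilog (1 - t) = π ^ 2 / 6 - log t * log (1 - t) := by
  have h_reflect := integral_comp_sub_left (fun x => -log (1 - x) / x) (a := t) (b := 1) 1
  simp only [sub_sub_cancel, sub_self] at h_reflect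
  rw [← integral_neg_log_one_sub_div_eq_dilog (t := 1 - t) (by linarith) (by linarith),
    ← h_reflect, integral_neg_log_div_one_sub ht0 ht1]
  ring

theorem dilog_one_half : dilog (1 / 2) = π ^ 2 / 12 - log 2 ^ 2 / 2 := by
  have := dilog_add_dilog_one_sub (t := 1 / 2) (by norm_num) (by norm_num)
  rw [show (1 : ℝ) - 1 / 2 = 1 / 2 by norm_num, one_div, log_inv] at this
  linarith

/-- The improper integral of `-log(1-x)/(x(1-x))` over `(0, 1/2)` equals `π²/12`. -/
theorem integral_neg_log_one_sub_div_self_mul_one_sub :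
    ∫ x in Set.Ioo (0 : ℝ) (1 / 2), -Real.log (1 - x) / (x * (1 - x))
      = Real.pi ^ 2 / 12 := by
  have h_half : (0 : ℝ) ≤ 1 / 2 := by norm_num
  have h_partial : ∀ x ∈ uIoo (0 : ℝ) (1 / 2),
      -log (1 - x) / (x * (1 - x)) = -log (1 - x) / x + -log (1 - x) / (1 - x) := by
    intro x hx
    rw [uIoo_of_le h_half] at hx
    have h_ne : 1 - x ≠ 0 := by linarith [hx.2]
    field_simp [hx.1.ne', h_ne]
    ring
  rw [← integral_Ioc_eq_integral_Ioo, ← integral_of_le h_half, integral_congr_uIoo h_partial,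
    integral_add (intervalIntegrable_neg_log_one_sub_div (by norm_num))
      (intervalIntegrable_neg_log_one_sub_div_one_sub (by norm_num)),
    integral_neg_log_one_sub_div_eq_dilog h_half (by norm_num), dilog_one_half,
    integral_neg_log_one_sub_div_one_sub (by norm_num),
    show (1 : ℝ) - 1 / 2 = 2⁻¹ by norm_num, log_inv]
  ring
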